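/- If {A,B} is an irreducible pair of multisets of positive integers, then |A| + |B| ≤ max(A) + max(B). -/

import Mathlib

/-- `{A,B}` is an irreducible pair: nonempty multisets of positive integers with equal
sums such that no nonempty proper submultisets `A' < A`, `B' < B` have equal sums. -/
def IrredPair (A B : Multiset ℕ) : Prop :=
  A ≠ 0 ∧ B ≠ 0 ∧ (∀ x ∈ A, 0 < x) ∧ (∀ x ∈ B, 0 < x) ∧
  A.sum = B.sum ∧
  ∀ A' B' : Multiset ℕ, A' < A → B' < B → A' ≠ 0 → B' ≠ 0 → A'.sum ≠ B'.sum

/-- `{A,B}` is a `k`-irreducible pair: irreducible and all elements are at most `k`. -/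
def KIrredPair (k : ℕ) (A B : Multiset ℕ) : Prop :=
  IrredPair A B ∧ (∀ x ∈ A, x ≤ k) ∧ (∀ x ∈ B, x ≤ k)

/-- Maximum element of a multiset of naturals (0 for the empty multiset). -/
def msetMax (S : Multiset ℕ) : ℕ := S.fold max 0

/-- A zero-sum multiset of integers is irreducible if it has no proper nonempty
zero-sum submultiset. -/
def IrredZeroSum (S : Multiset ℤ) : Prop :=
  ¬ ∃ T : Multiset ℤ, T ≤ S ∧ T ≠ 0 ∧ T ≠ S ∧ T.sum = 0


/-! Walk from `(0, 0)` to `(A, B)` adding one element at a time: an element of `A` while the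
excess `ΣA' - ΣB'` is `≤ 0`, an element of `B` otherwise. With all elements of `A` at most `a`
and those of `B` at most `b`, the excess stays in `[1 - b, a]`. The `|A| + |B|` excesses before
the last step are pairwise distinct, since two equal ones differ by a sub-pair with equal sums,
which irreducibility forbids; hence `|A| + |B| ≤ a + b`. -/

lemma le_msetMax {S : Multiset ℕ} {x : ℕ} (hx : x ∈ S) : x ≤ msetMax S :=
  Multiset.le_sup (α := ℕ) hx

namespace Multiset

lemma sum_le_sum_of_le {S T : Multiset ℕ} (h : T ≤ S) : T.sum ≤ S.sum := by
  obtain ⟨U, rfl⟩ := le_iff_exists_add.mp h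
  simp [sum_add]

lemma eq_of_le_of_sum_le {S T : Multiset ℕ} (hpos : ∀ x ∈ S, 0 < x) (hle : T ≤ S)
    (hsum : S.sum ≤ T.sum) : T = S := by
  obtain ⟨U, rfl⟩ := le_iff_exists_add.mp hle
  have hU : U.sum = 0 := by simp only [sum_add] at hsum; omega
  suffices U = 0 by simp [this]
  refine eq_zero_of_forall_notMem fun x hx => ?_
  exact (hpos x (mem_add.mpr (Or.inr hx))).ne' (sum_eq_zero_iff.mp hU x hx)

lemma exists_mem_cons_le_of_lt {S T : Multiset ℕ} (h : T < S) : ∃ x ∈ S, x ::ₘ T ≤ S := by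
  obtain ⟨x, hx⟩ := lt_iff_cons_le.mp h
  exact ⟨x, mem_of_le hx (mem_cons_self x T), hx⟩

end Multiset

open Multiset

def sumDiff (p : Multiset ℕ × Multiset ℕ) : ℤ := p.1.sum - p.2.sum

lemma sumDiff_sub {p q : Multiset ℕ × Multiset ℕ} (h : p ≤ q) :
    sumDiff (q - p) = sumDiff q - sumDiff p := by
  have h1 : (q.1 - p.1).sum + p.1.sum = q.1.sum := by
    rw [← sum_add, tsub_add_cancel_of_le h.1]
  have h2 : (q.2 - p.2).sum + p.2.sum = q.2.sum := by
    rw [← sum_add, tsub_add_cancel_of_le h.2]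
  simp only [sumDiff, Prod.fst_sub, Prod.snd_sub]
  omega

lemma exists_lt_sumDiff_mem_Icc {A B : Multiset ℕ} {a b : ℕ} (hsum : A.sum = B.sum)
    (hBpos : ∀ y ∈ B, 0 < y) (ha : ∀ x ∈ A, x ≤ a) (hb : ∀ y ∈ B, y ≤ b)
    {p : Multiset ℕ × Multiset ℕ} (hp : p ≤ (A, B)) (hpAB : p ≠ (A, B))
    (hd : sumDiff p ∈ Finset.Icc (1 - b : ℤ) a) :
    ∃ q, p < q ∧ q ≤ (A, B) ∧ card q.1 + card q.2 = card p.1 + card p.2 + 1 ∧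
      sumDiff q ∈ Finset.Icc (1 - b : ℤ) a := by
  obtain ⟨A', B'⟩ := p
  obtain ⟨hA', hB'⟩ : A' ≤ A ∧ B' ≤ B := hp
  have hsumA' := sum_le_sum_of_le hA'
  simp only [sumDiff, Finset.mem_Icc] at hd ⊢
  by_cases hd0 : (A'.sum : ℤ) - B'.sum ≤ 0
  · have hA'A : A' ≠ A := by
      rintro rfl
      rw [eq_of_le_of_sum_le hBpos hB' (by omega)] at hpAB
      exact hpAB rfl
    obtain ⟨x, hx, hxA'⟩ := exists_mem_cons_le_of_lt (lt_of_le_of_ne hA' hA'A)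
    refine ⟨(x ::ₘ A', B'), Prod.mk_lt_mk_iff_left.mpr (lt_cons_self A' x), ⟨hxA', hB'⟩,
      by simp only [card_cons]; omega, ?_⟩
    have := ha x hx
    simp only [sum_cons]
    omega
  · have hB'B : B' ≠ B := by
      rintro rfl
      omega
    obtain ⟨y, hy, hyB'⟩ := exists_mem_cons_le_of_lt (lt_of_le_of_ne hB' hB'B)
    refine ⟨(A', y ::ₘ B'), Prod.mk_lt_mk_iff_right.mpr (lt_cons_self B' y), ⟨hA', hyB'⟩,
      by simp only [card_cons]; omega, ?_⟩
    have := hb y hy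
    simp only [sum_cons]
    omega

namespace IrredPair

variable {A B : Multiset ℕ}

lemma sumDiff_ne_zero (h : IrredPair A B) {p : Multiset ℕ × Multiset ℕ} (hp : p ≤ (A, B))
    (hp0 : p ≠ 0) (hpAB : p ≠ (A, B)) : sumDiff p ≠ 0 := by
  obtain ⟨-, -, hApos, hBpos, hsum, hirr⟩ := h
  obtain ⟨A', B'⟩ := p
  obtain ⟨hA', hB'⟩ : A' ≤ A ∧ B' ≤ B := hp
  have hA'pos : ∀ x ∈ A', 0 < x := fun x hx => hApos x (mem_of_le hA' hx)
  have hB'pos : ∀ y ∈ B', 0 < y := fun y hy => hBpos y (mem_of_le hB' hy)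
  intro hd
  have heq : A'.sum = B'.sum := by simp only [sumDiff] at hd; omega
  have hA'0 : A' ≠ 0 := by
    rintro rfl
    exact hp0 (Prod.ext rfl (eq_of_le_of_sum_le hB'pos (zero_le B') (by simp [← heq])).symm)
  have hB'0 : B' ≠ 0 := by
    rintro rfl
    exact hp0 (Prod.ext (eq_of_le_of_sum_le hA'pos (zero_le A') (by simp [heq])).symm rfl)
  have hA'A : A' ≠ A := by
    rintro rfl
    rw [eq_of_le_of_sum_le hBpos hB' (by omega)] at hpAB
    exact hpAB rfl
  have hB'B : B' ≠ B := by
    rintro rfl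
    rw [eq_of_le_of_sum_le hApos hA' (by omega)] at hpAB
    exact hpAB rfl
  exact hirr A' B' (lt_of_le_of_ne hA' hA'A) (lt_of_le_of_ne hB' hB'B) hA'0 hB'0 heq

lemma sumDiff_ne_of_lt (h : IrredPair A B) {p q : Multiset ℕ × Multiset ℕ} (hpq : p < q)
    (hq : q ≤ (A, B)) (hqAB : q ≠ (A, B)) : sumDiff p ≠ sumDiff q := by
  intro he
  refine h.sumDiff_ne_zero (tsub_le_self.trans hq)
    (fun h0 => hpq.not_ge (tsub_eq_zero_iff_le.mp h0))
    (fun h1 => hqAB (le_antisymm hq (h1 ▸ tsub_le_self))) ?_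
  rw [sumDiff_sub hpq.le, he, sub_self]

lemma exists_walk (h : IrredPair A B) {a b : ℕ} (ha : ∀ x ∈ A, x ≤ a) (hb : ∀ y ∈ B, y ≤ b)
    {k : ℕ} (hk : k ≤ card A + card B) :
    ∃ p ≤ (A, B), card p.1 + card p.2 = k ∧ sumDiff p ∈ Finset.Icc (1 - b : ℤ) a ∧
      ∃ V : Finset ℤ, V ⊆ Finset.Icc (1 - b : ℤ) a ∧ V.card = k ∧
        ∀ v ∈ V, ∃ r < p, sumDiff r = v := by
  have ⟨_, hB0, _, hBpos, hsum, _⟩ := h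
  induction k with
  | zero =>
    obtain ⟨y, hy⟩ := exists_mem_of_ne_zero hB0
    have hb1 : 1 ≤ b := (hBpos y hy).trans_le (hb y hy)
    refine ⟨0, bot_le, rfl, ?_, ∅, by simp, rfl, by simp⟩
    simp only [sumDiff, Finset.mem_Icc, Prod.fst_zero, Prod.snd_zero, sum_zero]
    omega
  | succ k ih =>
    obtain ⟨p, hp, hcard, hd, V, hVI, hV, hVp⟩ := ih (by omega)
    have hpAB : p ≠ (A, B) := by
      rintro rfl
      dsimp only at hcard
      omega
    obtain ⟨q, hpq, hq, hqcard, hqd⟩ :=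
      exists_lt_sumDiff_mem_Icc hsum hBpos ha hb hp hpAB hd
    have hfresh : sumDiff p ∉ V := fun hpV => by
      obtain ⟨r, hrp, hr⟩ := hVp _ hpV
      exact h.sumDiff_ne_of_lt hrp hp hpAB hr
    refine ⟨q, hq, by omega, hqd, insert (sumDiff p) V, Finset.insert_subset hd hVI,
      by rw [Finset.card_insert_of_notMem hfresh, hV], ?_⟩
    simp only [Finset.mem_insert, forall_eq_or_imp]
    exact ⟨⟨p, hpq, rfl⟩, fun v hv => (hVp v hv).imp fun r hr => ⟨hr.1.trans hpq, hr.2⟩⟩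

theorem card_add_card_le (h : IrredPair A B) {a b : ℕ} (ha : ∀ x ∈ A, x ≤ a)
    (hb : ∀ y ∈ B, y ≤ b) : card A + card B ≤ a + b := by
  obtain ⟨-, -, -, -, V, hVI, hV, -⟩ := h.exists_walk ha hb le_rfl
  have := Finset.card_le_card hVI
  rw [Int.card_Icc, hV] at this
  omega

end IrredPair

theorem stmt16 (A B : Multiset ℕ) (h : IrredPair A B) :
    Multiset.card A + Multiset.card B ≤ msetMax A + msetMax B :=
  h.card_add_card_le (fun _ => le_msetMax) (fun _ => le_msetMax)
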